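/- arXiv:1506.00362 — 6 statements merged into one kernel-verified Lean document; each statement's English description precedes it below -/
import Mathlib

section
/- For n = 3 and dominant λ = (λ_1, λ_2, λ_3), the affine map T(u^1_1, u^1_2, u^2_1) = (λ_1 − u^1_1, λ_3 + u^1_2, λ_3 + u^1_2 + u^2_1) is a bijection from FFLV(λ) onto the Gelfand–Zetlin polytope GZ(λ), and its linear part is unimodular (determinant ±1). -/
/-- The FFLV polytope for `GL_3` in coordinates `(u^1_1, u^1_2, u^2_1) = (u 0, u 1, u 2)`. -/
def FFLV3 (l1 l2 l3 : ℝ) : Set (Fin 3 → ℝ) :=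
  {u | 0 ≤ u 0 ∧ u 0 ≤ l1 - l2 ∧ 0 ≤ u 1 ∧ u 1 ≤ l2 - l3 ∧ 0 ≤ u 2 ∧
       u 0 + u 2 + u 1 ≤ l1 - l3}

/-- The Gelfand–Zetlin polytope for `GL_3` in coordinates `(z^1_1, z^1_2, z^2_1) = (z 0, z 1, z 2)`:
`λ_1 ≥ z^1_1 ≥ λ_2`, `λ_2 ≥ z^1_2 ≥ λ_3`, `z^1_1 ≥ z^2_1 ≥ z^1_2`. -/
def GZ3 (l1 l2 l3 : ℝ) : Set (Fin 3 → ℝ) :=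
  {z | l2 ≤ z 0 ∧ z 0 ≤ l1 ∧ l3 ≤ z 1 ∧ z 1 ≤ l2 ∧ z 1 ≤ z 2 ∧ z 2 ≤ z 0}

/-- The affine map `T(u^1_1, u^1_2, u^2_1) = (λ_1 − u^1_1, λ_3 + u^1_2, λ_3 + u^1_2 + u^2_1)`. -/
def Tmap (l1 l3 : ℝ) (u : Fin 3 → ℝ) : Fin 3 → ℝ :=
  ![l1 - u 0, l3 + u 1, l3 + u 1 + u 2]

theorem fflv3_gz3_unimodular_bijection (l1 l2 l3 : ℝ) (hdom : l2 ≤ l1 ∧ l3 ≤ l2) :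
    Set.BijOn (Tmap l1 l3) (FFLV3 l1 l2 l3) (GZ3 l1 l2 l3) ∧
    (∀ u : Fin 3 → ℝ,
      Tmap l1 l3 u = (!![(-1 : ℝ), 0, 0; 0, 1, 0; 0, 1, 1]).mulVec u + ![l1, l3, l3]) ∧
    ((!![(-1 : ℝ), 0, 0; 0, 1, 0; 0, 1, 1]).det = 1 ∨
     (!![(-1 : ℝ), 0, 0; 0, 1, 0; 0, 1, 1]).det = -1) := by
  refine ⟨⟨?_, ?_, ?_⟩, ?_, ?_⟩
  · rintro u ⟨h1, h2, h3, h4, h5, h6⟩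
    refine ⟨by simp [Tmap]; linarith, by simp [Tmap]; linarith, by simp [Tmap]; linarith,
      by simp [Tmap]; linarith, by simp [Tmap]; linarith, by simp [Tmap]; linarith⟩
  · rintro u hu v hv h
    have h0 := congrFun h 0
    have h1 := congrFun h 1
    have h2 := congrFun h 2
    simp [Tmap] at h0 h1 h2
    funext i
    fin_cases i <;> simp <;> linarith
  · rintro z ⟨h1, h2, h3, h4, h5, h6⟩
    refine ⟨![l1 - z 0, z 1 - l3, z 2 - z 1], ⟨?_, ?_, ?_, ?_, ?_, ?_⟩, ?_⟩
    · simpa using by linarith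
    · simpa using by linarith
    · simpa using by linarith
    · simpa using by linarith
    · simpa using by linarith
    · simpa using by linarith
    · funext i; fin_cases i <;> simp [Tmap] <;> ring
  · intro u
    funext i
    fin_cases i <;> simp [Tmap, Matrix.mulVec, dotProduct, Fin.sum_univ_three] <;> ring
  · right
    simp [Matrix.det_fin_three]
end

section
/- For n = 3 and every dominant integral λ, the polytopes FFLV(λ) and GZ(λ) contain the same number of integer lattice points. -/
theorem fflv3_gz3_same_lattice_point_count (l1 l2 l3 : ℤ) (h12 : l2 ≤ l1) (h23 : l3 ≤ l2) :
    {u : ℤ × ℤ × ℤ | 0 ≤ u.1 ∧ u.1 ≤ l1 - l2 ∧ 0 ≤ u.2.2 ∧ u.2.2 ≤ l2 - l3 ∧ 0 ≤ u.2.1 ∧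
        u.1 + u.2.1 + u.2.2 ≤ l1 - l3}.ncard =
    {z : ℤ × ℤ × ℤ | l2 ≤ z.1 ∧ z.1 ≤ l1 ∧ l3 ≤ z.2.1 ∧ z.2.1 ≤ l2 ∧
        z.2.1 ≤ z.2.2 ∧ z.2.2 ≤ z.1}.ncard := by
  have himg : {z : ℤ × ℤ × ℤ | l2 ≤ z.1 ∧ z.1 ≤ l1 ∧ l3 ≤ z.2.1 ∧ z.2.1 ≤ l2 ∧
        z.2.1 ≤ z.2.2 ∧ z.2.2 ≤ z.1} =
      (fun u : ℤ × ℤ × ℤ => (l1 - u.1, l3 + u.2.2, l3 + u.2.2 + u.2.1)) ''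
      {u : ℤ × ℤ × ℤ | 0 ≤ u.1 ∧ u.1 ≤ l1 - l2 ∧ 0 ≤ u.2.2 ∧ u.2.2 ≤ l2 - l3 ∧ 0 ≤ u.2.1 ∧
        u.1 + u.2.1 + u.2.2 ≤ l1 - l3} := by
    ext ⟨z1, z2, z3⟩
    simp only [Set.mem_setOf_eq, Set.mem_image, Prod.exists, Prod.mk.injEq]
    constructor
    · rintro ⟨h1, h2, h3, h4, h5, h6⟩
      exact ⟨l1 - z1, z3 - z2, z2 - l3, by constructor <;> omega, by omega, by omega, by omega⟩
    · rintro ⟨a, b, c, ⟨h1, h2, h3, h4, h5, h6⟩, e1, e2, e3⟩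
      refine ⟨by omega, by omega, by omega, by omega, by omega, by omega⟩
  rw [himg, Set.ncard_image_of_injective]
  intro ⟨a, b, c⟩ ⟨a', b', c'⟩ h
  simp only [Prod.mk.injEq] at h ⊢
  omega
end

section
/- Let P ⊂ ℝ^l be a convex body, I ⊂ ℝ a closed segment, and μ : I → {compact convex subsets of ℝ^l} a map such that (μ(t_1) + μ(t_2))/2 ⊆ μ((t_1+t_2)/2) for all t_1, t_2 ∈ I, where + is Minkowski sum, and such that the total set is closed. Then the set P_μ := ⋃_{t∈I} μ(t) × {t} ⊂ ℝ^{l+1} is convex. -/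
/-!
The total set is closed by assumption and closed under midpoints by the midpoint condition, and a
closed set that is closed under midpoints is convex. It suffices to check this on the line through
two of its points, i.e. in `ℝ`: a point `z` missing from such a set `T ⊆ ℝ` would lie in a gap
`(c, d)` whose endpoints are in `T` by closedness, and then so would the midpoint of `c` and `d`.
-/

open Pointwise Set

theorem Real.convex_of_isClosed_of_midpoint_mem {T : Set ℝ} (hT : IsClosed T)
    (hmid : ∀ x ∈ T, ∀ y ∈ T, midpoint ℝ x y ∈ T) : Convex ℝ T := by
  refine convex_iff_ordConnected.2 ⟨fun x hx y hy z ⟨hxz, hzy⟩ => ?_⟩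
  by_contra hzT
  set c := sSup (T ∩ Icc x z)
  set d := sInf (T ∩ Icc z y)
  have hc : c ∈ T ∩ Icc x z :=
    (hT.inter isClosed_Icc).csSup_mem ⟨x, hx, le_rfl, hxz⟩ bddAbove_Icc.inter_of_right
  have hd : d ∈ T ∩ Icc z y :=
    (hT.inter isClosed_Icc).csInf_mem ⟨y, hy, hzy, le_rfl⟩ bddBelow_Icc.inter_of_right
  have hcz : c < z := lt_of_le_of_ne hc.2.2 fun h => hzT (h ▸ hc.1)
  have hzd : z < d := lt_of_le_of_ne hd.2.1 fun h => hzT (h ▸ hd.1)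
  have hm : midpoint ℝ c d = (c + d) / 2 := by
    simp only [midpoint_eq_smul_add, invOf_eq_inv, smul_eq_mul]
    ring
  have hmT := hmid c hc.1 d hd.1
  rcases le_total (midpoint ℝ c d) z with hmz | hzm
  · have : midpoint ℝ c d ≤ c :=
      le_csSup bddAbove_Icc.inter_of_right ⟨hmT, by linarith [hc.2.1], hmz⟩
    linarith
  · have : d ≤ midpoint ℝ c d :=
      csInf_le bddBelow_Icc.inter_of_right ⟨hmT, hzm, by linarith [hd.2.2]⟩
    linarith

theorem IsClosed.convex_of_midpoint_mem {E : Type*} [AddCommGroup E] [TopologicalSpace E]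
    [IsTopologicalAddGroup E] [Module ℝ E] [ContinuousSMul ℝ E] {s : Set E} (hs : IsClosed s)
    (hmid : ∀ x ∈ s, ∀ y ∈ s, midpoint ℝ x y ∈ s) : Convex ℝ s := by
  refine convex_iff_segment_subset.2 fun x hx y hy => ?_
  rw [segment_eq_image_lineMap, image_subset_iff]
  have hline : Convex ℝ (AffineMap.lineMap x y ⁻¹' s) :=
    Real.convex_of_isClosed_of_midpoint_mem (hs.preimage AffineMap.lineMap_continuous)
      fun t ht u hu => by
        simpa only [mem_preimage, AffineMap.map_midpoint] using hmid _ ht _ hu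
  exact hline.ordConnected.out (by simpa using hx) (by simpa using hy)

theorem midpoint_mem_of_half_smul_add_half_smul_subset {E : Type*} [AddCommGroup E] [Module ℝ E]
    {I : Set ℝ} (hI : Convex ℝ I) {mu : ℝ → Set E}
    (hmid : ∀ t₁ ∈ I, ∀ t₂ ∈ I, (2⁻¹ : ℝ) • mu t₁ + (2⁻¹ : ℝ) • mu t₂ ⊆ mu ((t₁ + t₂) / 2))
    {p q : E × ℝ} (hp : p.2 ∈ I ∧ p.1 ∈ mu p.2) (hq : q.2 ∈ I ∧ q.1 ∈ mu q.2) :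
    (midpoint ℝ p q).2 ∈ I ∧ (midpoint ℝ p q).1 ∈ mu (midpoint ℝ p q).2 := by
  have hfst : (midpoint ℝ p q).1 = (2⁻¹ : ℝ) • p.1 + (2⁻¹ : ℝ) • q.1 := by
    simp only [midpoint_eq_smul_add, invOf_eq_inv, Prod.smul_fst, Prod.fst_add, smul_add]
  have hsnd : (midpoint ℝ p q).2 = (p.2 + q.2) / 2 := by
    simp only [midpoint_eq_smul_add, invOf_eq_inv, Prod.smul_snd, Prod.snd_add, smul_eq_mul,
      inv_mul_eq_div]
  have hI_mid : (p.2 + q.2) / 2 ∈ I := by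
    simpa only [midpoint_eq_smul_add, invOf_eq_inv, smul_eq_mul, inv_mul_eq_div]
      using hI.midpoint_mem hp.1 hq.1
  rw [hfst, hsnd]
  exact ⟨hI_mid,
    hmid _ hp.1 _ hq.1 (add_mem_add (smul_mem_smul_set hp.2) (smul_mem_smul_set hq.2))⟩

theorem convex_of_midpoint_fibered_general (l : ℕ)
    (a b : ℝ)
    (mu : ℝ → Set (Fin l → ℝ))
    (hmid : ∀ t₁ ∈ Set.Icc a b, ∀ t₂ ∈ Set.Icc a b,
      (2⁻¹ : ℝ) • mu t₁ + (2⁻¹ : ℝ) • mu t₂ ⊆ mu ((t₁ + t₂) / 2))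
    (hclosed : IsClosed {q : (Fin l → ℝ) × ℝ | q.2 ∈ Set.Icc a b ∧ q.1 ∈ mu q.2}) :
    Convex ℝ {q : (Fin l → ℝ) × ℝ | q.2 ∈ Set.Icc a b ∧ q.1 ∈ mu q.2} :=
  hclosed.convex_of_midpoint_mem fun _ hp _ hq =>
    midpoint_mem_of_half_smul_add_half_smul_subset (convex_Icc a b) hmid hp hq

theorem convex_of_midpoint_fibered (l : ℕ) (P : Set (Fin l → ℝ))
    (hPconv : Convex ℝ P) (hPcomp : IsCompact P) (hPne : P.Nonempty)
    (a b : ℝ) (hab : a ≤ b)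
    (mu : ℝ → Set (Fin l → ℝ))
    (hconv : ∀ t ∈ Set.Icc a b, Convex ℝ (mu t))
    (hcomp : ∀ t ∈ Set.Icc a b, IsCompact (mu t))
    (hmid : ∀ t₁ ∈ Set.Icc a b, ∀ t₂ ∈ Set.Icc a b,
      (2⁻¹ : ℝ) • mu t₁ + (2⁻¹ : ℝ) • mu t₂ ⊆ mu ((t₁ + t₂) / 2))
    (hclosed : IsClosed {q : (Fin l → ℝ) × ℝ | q.2 ∈ Set.Icc a b ∧ q.1 ∈ mu q.2}) :
    Convex ℝ {q : (Fin l → ℝ) × ℝ | q.2 ∈ Set.Icc a b ∧ q.1 ∈ mu q.2} :=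
  convex_of_midpoint_fibered_general l a b mu hmid hclosed
end

section
/- For n = 4 and dominant λ, the face F_1(λ) of FFLV(λ), concretely the polytope in coordinates (u^1_1, u^2_1, u^3_1, u^1_2, u^2_2) defined by: 0 ≤ u^1_1 ≤ λ_1−λ_2; 0 ≤ u^1_2 ≤ λ_2−λ_3; u^1_2+u^2_2 ≤ λ_2−λ_4; u^2_1, u^3_1, u^2_2 ≥ 0; u^1_1+u^2_1+u^1_2 ≤ λ_1−λ_3; u^1_1+u^2_1+u^1_2+u^2_2 ≤ λ_1−λ_4; u^1_1+u^2_1+u^3_1+u^2_2 ≤ λ_1−λ_4, equals the convex hull over integer t ∈ [λ_4, λ_2] of the translated faces (t−λ_4)e_{u^2_2} + F_2(μ(t)), where μ(t) = (λ_1, λ_2, λ_3, t) for λ_4 ≤ t ≤ λ_3 and μ(t) = (λ_1, λ_2, t, t) for λ_3 ≤ t ≤ λ_2, and F_2(μ) is defined by 0 ≤ u^1_1 ≤ μ_1−μ_2, 0 ≤ u^1_2 ≤ μ_2−μ_3, u^2_1, u^3_1 ≥ 0, u^1_1+u^2_1+u^1_2 ≤ μ_1−μ_3, u^1_1+u^2_1+u^3_1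 ≤ μ_1−μ_4, with u^2_2 = 0. -/
open Pointwise
set_option maxHeartbeats 1600000

/-- The face `F_1(λ)` of the `GL_4` FFLV polytope, in coordinates
`(u^1_1, u^2_1, u^3_1, u^1_2, u^2_2) = (v 0, …, v 4)`. -/
def F1 (l1 l2 l3 l4 : ℝ) : Set (Fin 5 → ℝ) :=
  {v | 0 ≤ v 0 ∧ v 0 ≤ l1 - l2 ∧ 0 ≤ v 3 ∧ v 3 ≤ l2 - l3 ∧ v 3 + v 4 ≤ l2 - l4 ∧
       0 ≤ v 1 ∧ 0 ≤ v 2 ∧ 0 ≤ v 4 ∧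
       v 0 + v 1 + v 3 ≤ l1 - l3 ∧
       v 0 + v 1 + v 3 + v 4 ≤ l1 - l4 ∧
       v 0 + v 1 + v 2 + v 4 ≤ l1 - l4}

/-- The face `F_2(μ)`: `0 ≤ u^1_1 ≤ μ_1 − μ_2`, `0 ≤ u^1_2 ≤ μ_2 − μ_3`, `u^2_1, u^3_1 ≥ 0`,
`u^1_1 + u^2_1 + u^1_2 ≤ μ_1 − μ_3`, `u^1_1 + u^2_1 + u^3_1 ≤ μ_1 − μ_4`, `u^2_2 = 0`. -/
def F2 (m1 m2 m3 m4 : ℝ) : Set (Fin 5 → ℝ) :=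
  {v | 0 ≤ v 0 ∧ v 0 ≤ m1 - m2 ∧ 0 ≤ v 3 ∧ v 3 ≤ m2 - m3 ∧ 0 ≤ v 1 ∧ 0 ≤ v 2 ∧
       v 0 + v 1 + v 3 ≤ m1 - m3 ∧ v 0 + v 1 + v 2 ≤ m1 - m4 ∧ v 4 = 0}

lemma comb_le {a b u v C : ℝ} (ha : 0 ≤ a) (hb : 0 ≤ b) (hab : a + b = 1)
    (hu : u ≤ C) (hv : v ≤ C) : a * u + b * v ≤ C := by
  have h1 : a * u ≤ a * C := mul_le_mul_of_nonneg_left hu ha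
  have h2 : b * v ≤ b * C := mul_le_mul_of_nonneg_left hv hb
  have h3 : a * C + b * C = C := by rw [← add_mul, hab, one_mul]
  linarith

lemma convex_F1 (l1 l2 l3 l4 : ℝ) : Convex ℝ (F1 l1 l2 l3 l4) := by
  intro x hx y hy a b ha hb hab
  obtain ⟨x1, x2, x3, x4, x5, x6, x7, x8, x9, x10, x11⟩ := hx
  obtain ⟨y1, y2, y3, y4, y5, y6, y7, y8, y9, y10, y11⟩ := hy
  have e : ∀ i : Fin 5, (a • x + b • y) i = a * x i + b * y i := fun i => rfl
  refine ⟨?_, ?_, ?_, ?_, ?_, ?_, ?_, ?_, ?_, ?_, ?_⟩ <;> simp only [e]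
  · linarith [mul_nonneg ha x1, mul_nonneg hb y1]
  · exact comb_le ha hb hab x2 y2
  · linarith [mul_nonneg ha x3, mul_nonneg hb y3]
  · exact comb_le ha hb hab x4 y4
  · linarith [comb_le ha hb hab x5 y5]
  · linarith [mul_nonneg ha x6, mul_nonneg hb y6]
  · linarith [mul_nonneg ha x7, mul_nonneg hb y7]
  · linarith [mul_nonneg ha x8, mul_nonneg hb y8]
  · linarith [comb_le ha hb hab x9 y9]
  · linarith [comb_le ha hb hab x10 y10]
  · linarith [comb_le ha hb hab x11 y11]

lemma sub_easy (l1 l2 l3 l4 : ℤ) (h : l2 ≤ l1 ∧ l3 ≤ l2 ∧ l4 ≤ l3) :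
    (⋃ t : ℤ, ⋃ (_ : l4 ≤ t ∧ t ≤ l2),
        ({(Pi.single 4 ((t : ℝ) - (l4 : ℝ)) : Fin 5 → ℝ)} +
          F2 (l1 : ℝ) (l2 : ℝ) (max (l3 : ℝ) (t : ℝ)) (t : ℝ))) ⊆
      F1 (l1 : ℝ) (l2 : ℝ) (l3 : ℝ) (l4 : ℝ) := by
  intro x hx
  simp only [Set.mem_iUnion] at hx
  obtain ⟨t, ⟨ht1, ht2⟩, hx⟩ := hx
  rw [Set.singleton_add] at hx
  obtain ⟨y, hy, rfl⟩ := hx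
  obtain ⟨y1, y2, y3, y4, y5, y6, y7, y8, y9⟩ := hy
  have e : ∀ i : Fin 5, ((Pi.single 4 ((t : ℝ) - (l4 : ℝ)) : Fin 5 → ℝ) + · ) y i =
      (Pi.single 4 ((t : ℝ) - (l4 : ℝ)) : Fin 5 → ℝ) i + y i := fun i => rfl
  have s0 : (Pi.single 4 ((t : ℝ) - (l4 : ℝ)) : Fin 5 → ℝ) 0 = 0 :=
    Pi.single_eq_of_ne (by decide) _
  have s1 : (Pi.single 4 ((t : ℝ) - (l4 : ℝ)) : Fin 5 → ℝ) 1 = 0 :=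
    Pi.single_eq_of_ne (by decide) _
  have s2 : (Pi.single 4 ((t : ℝ) - (l4 : ℝ)) : Fin 5 → ℝ) 2 = 0 :=
    Pi.single_eq_of_ne (by decide) _
  have s3 : (Pi.single 4 ((t : ℝ) - (l4 : ℝ)) : Fin 5 → ℝ) 3 = 0 :=
    Pi.single_eq_of_ne (by decide) _
  have s4 : (Pi.single 4 ((t : ℝ) - (l4 : ℝ)) : Fin 5 → ℝ) 4 = (t : ℝ) - (l4 : ℝ) :=
    Pi.single_eq_same _ _
  have hm1 : (l3:ℝ) ≤ max (l3:ℝ) (t:ℝ) := le_max_left _ _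
  have hm2 : (t:ℝ) ≤ max (l3:ℝ) (t:ℝ) := le_max_right _ _
  have ht1' : (l4:ℝ) ≤ (t:ℝ) := by exact_mod_cast ht1
  have ht2' : (t:ℝ) ≤ (l2:ℝ) := by exact_mod_cast ht2
  refine ⟨?_, ?_, ?_, ?_, ?_, ?_, ?_, ?_, ?_, ?_, ?_⟩ <;>
    simp only [e, s0, s1, s2, s3, s4] <;> linarith

lemma mem_target {l1 l2 l3 l4 : ℤ} (t : ℤ) (h1 : l4 ≤ t) (h2 : t ≤ l2) (w : Fin 5 → ℝ)
    (c0 : 0 ≤ w 0) (c1 : w 0 ≤ (l1:ℝ) - l2) (c2 : 0 ≤ w 3)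
    (c3 : w 3 ≤ (l2:ℝ) - max (l3:ℝ) (t:ℝ))
    (c4 : 0 ≤ w 1) (c5 : 0 ≤ w 2)
    (c6 : w 0 + w 1 + w 3 ≤ (l1:ℝ) - max (l3:ℝ) (t:ℝ))
    (c7 : w 0 + w 1 + w 2 ≤ (l1:ℝ) - (t:ℝ)) (c8 : w 4 = (t:ℝ) - (l4:ℝ)) :
    w ∈ ⋃ t : ℤ, ⋃ (_ : l4 ≤ t ∧ t ≤ l2),
        ({(Pi.single 4 ((t : ℝ) - (l4 : ℝ)) : Fin 5 → ℝ)} +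
          F2 (l1 : ℝ) (l2 : ℝ) (max (l3 : ℝ) (t : ℝ)) (t : ℝ)) := by
  refine Set.mem_iUnion.2 ⟨t, Set.mem_iUnion.2 ⟨⟨h1, h2⟩, ?_⟩⟩
  have hw : w = (Pi.single 4 ((t : ℝ) - (l4 : ℝ)) : Fin 5 → ℝ) + Function.update w 4 0 := by
    funext i
    fin_cases i <;> simp [Function.update, c8]
  rw [hw]
  refine Set.add_mem_add rfl ?_
  refine ⟨?_, ?_, ?_, ?_, ?_, ?_, ?_, ?_, ?_⟩ <;>
    simp [Function.update] <;> assumption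

lemma sub_hard (l1 l2 l3 l4 : ℤ) (h : l2 ≤ l1 ∧ l3 ≤ l2 ∧ l4 ≤ l3) :
    F1 (l1 : ℝ) (l2 : ℝ) (l3 : ℝ) (l4 : ℝ) ⊆
      convexHull ℝ (⋃ t : ℤ, ⋃ (_ : l4 ≤ t ∧ t ≤ l2),
        ({(Pi.single 4 ((t : ℝ) - (l4 : ℝ)) : Fin 5 → ℝ)} +
          F2 (l1 : ℝ) (l2 : ℝ) (max (l3 : ℝ) (t : ℝ)) (t : ℝ))) := by
  obtain ⟨hl12, hl23, hl34⟩ := h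
  intro v hv
  obtain ⟨h1, h2, h3, h4, h5, h6, h7, h8, h9, h10, h11⟩ := hv
  set s : ℝ := v 4 + (l4:ℝ) with hsdef
  have hs1 : (l4:ℝ) ≤ s := by simp [hsdef]; linarith
  have hs2 : s ≤ (l2:ℝ) := by simp [hsdef]; linarith
  set t0 : ℤ := ⌊s⌋ with ht0def
  have hf1 : (t0:ℝ) ≤ s := Int.floor_le s
  have hf2 : s < (t0:ℝ) + 1 := Int.lt_floor_add_one s
  have ht0l4 : l4 ≤ t0 := Int.le_floor.mpr hs1
  have ht0l2 : t0 ≤ l2 := by exact_mod_cast le_trans hf1 hs2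
  by_cases hθ0 : (t0:ℝ) = s
  · -- integer level: v itself is in the union
    apply subset_convexHull
    refine mem_target t0 ht0l4 ht0l2 v h1 h2 h3 ?_ h6 h7 ?_ ?_ ?_
    · rcases max_cases (l3:ℝ) (t0:ℝ) with ⟨he, _⟩ | ⟨he, _⟩ <;> rw [he] <;> linarith
    · rcases max_cases (l3:ℝ) (t0:ℝ) with ⟨he, _⟩ | ⟨he, _⟩ <;> rw [he] <;> linarith
    · linarith
    · linarith
  · -- fractional level
    have hθpos : 0 < s - (t0:ℝ) := sub_pos.mpr (lt_of_le_of_ne hf1 hθ0)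
    set θ : ℝ := s - (t0:ℝ) with hθdef
    have hθ1 : θ < 1 := by simp [hθdef]; linarith
    have h1θ : (0:ℝ) < 1 - θ := by linarith
    have ht1l2 : t0 + 1 ≤ l2 := by
      rcases lt_or_eq_of_le ht0l2 with hlt | heq
      · omega
      · exfalso; apply hθ0; rw [heq]; linarith [show ((l2:ℤ):ℝ) ≤ s from by rw [← heq]; exact hf1]
    have ht1l2' : (t0:ℝ) + 1 ≤ (l2:ℝ) := by exact_mod_cast ht1l2
    have hcomb : ∀ w w' : Fin 5 → ℝ,
        w ∈ (⋃ t : ℤ, ⋃ (_ : l4 ≤ t ∧ t ≤ l2),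
          ({(Pi.single 4 ((t : ℝ) - (l4 : ℝ)) : Fin 5 → ℝ)} +
            F2 (l1 : ℝ) (l2 : ℝ) (max (l3 : ℝ) (t : ℝ)) (t : ℝ))) →
        w' ∈ (⋃ t : ℤ, ⋃ (_ : l4 ≤ t ∧ t ≤ l2),
          ({(Pi.single 4 ((t : ℝ) - (l4 : ℝ)) : Fin 5 → ℝ)} +
            F2 (l1 : ℝ) (l2 : ℝ) (max (l3 : ℝ) (t : ℝ)) (t : ℝ))) →
        v = (1 - θ) • w + θ • w' →
        v ∈ convexHull ℝ (⋃ t : ℤ, ⋃ (_ : l4 ≤ t ∧ t ≤ l2),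
          ({(Pi.single 4 ((t : ℝ) - (l4 : ℝ)) : Fin 5 → ℝ)} +
            F2 (l1 : ℝ) (l2 : ℝ) (max (l3 : ℝ) (t : ℝ)) (t : ℝ))) := by
      intro w w' hw hw' hveq
      rw [hveq]
      exact (convex_convexHull ℝ _) (subset_convexHull ℝ _ hw) (subset_convexHull ℝ _ hw')
        (by linarith) (by linarith) (by ring)
    by_cases hc : s ≤ (l3:ℝ)
    · -- Case A : s < l3, only third coordinate varies
      have ht0l3 : (t0:ℝ) ≤ (l3:ℝ) := le_trans hf1 hc
      have ht1l3 : (t0:ℝ) + 1 ≤ (l3:ℝ) := by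
        have : t0 ≤ l3 := by exact_mod_cast ht0l3
        rcases lt_or_eq_of_le this with hlt | heq
        · exact_mod_cast hlt
        · exfalso; apply hθ0; rw [heq]; linarith [show s ≤ ((l3:ℤ):ℝ) from by exact_mod_cast hc,
            show ((l3:ℤ):ℝ) ≤ s from by rw [← heq]; exact hf1]
      set B1 : ℝ := (l1:ℝ) - ((t0:ℝ) + 1) - v 0 - v 1 with hB1def
      have hB1 : 0 ≤ B1 := by simp only [hB1def]; linarith
      set a2 : ℝ := min (v 2) B1 with ha2def
      have ha2v : a2 ≤ v 2 := min_le_left _ _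
      have ha2B : a2 ≤ B1 := min_le_right _ _
      have ha2n : 0 ≤ a2 := le_min h7 hB1
      set w' : Fin 5 → ℝ := ![v 0, v 1, a2, v 3, (t0:ℝ) + 1 - (l4:ℝ)] with hw'def
      set w : Fin 5 → ℝ := ![v 0, v 1, (v 2 - θ * a2)/(1 - θ), v 3, (t0:ℝ) - (l4:ℝ)] with hwdef
      have hmax0 : max (l3:ℝ) ((t0:ℝ)) = (l3:ℝ) := max_eq_left (by linarith)
      have hmax1 : max (l3:ℝ) ((t0:ℝ) + 1) = (l3:ℝ) := max_eq_left (by linarith)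
      have hw2val : w 2 = (v 2 - θ * a2)/(1 - θ) := rfl
      have hw2n : 0 ≤ w 2 := by
        rw [hw2val]
        apply div_nonneg _ (by linarith)
        linarith [mul_le_mul_of_nonneg_left ha2v hθpos.le,
          mul_le_mul_of_nonneg_right hθ1.le h7]
      have hw2b : v 0 + v 1 + w 2 ≤ (l1:ℝ) - (t0:ℝ) := by
        rw [hw2val]
        have key : v 2 - θ * a2 ≤ (1 - θ) * ((l1:ℝ) - (t0:ℝ) - v 0 - v 1) := by
          rcases min_cases (v 2) B1 with ⟨he, hle⟩ | ⟨he, hlt⟩ <;> rw [ha2def, he]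
          · linarith [mul_le_mul_of_nonneg_left (show v 2 ≤ (l1:ℝ) - (t0:ℝ) - v 0 - v 1 by
              simp only [hsdef] at *; linarith) h1θ.le]
          · simp only [hB1def]; simp only [hsdef, hθdef] at *; linarith
        have h2' : (v 2 - θ * a2)/(1 - θ) ≤ (l1:ℝ) - (t0:ℝ) - v 0 - v 1 := by
          rw [div_le_iff₀ h1θ]; linarith [key]
        linarith
      have hwmem := mem_target (l1 := l1) (l2 := l2) (l3 := l3) t0 ht0l4 ht0l2 w
        h1 h2 h3 (by rw [hmax0]; show v 3 ≤ _; linarith) h6 hw2n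
        (by rw [hmax0]; show v 0 + v 1 + v 3 ≤ _; linarith)
        (by push_cast; exact hw2b) rfl
      have hw'mem := mem_target (l1 := l1) (l2 := l2) (l3 := l3) (t0 + 1)
        (ht0l4.trans (Int.le.intro 1 rfl)) ht1l2 w'
        h1 h2 h3 (by push_cast; rw [hmax1]; show v 3 ≤ _; linarith) h6 ha2n
        (by push_cast; rw [hmax1]; show v 0 + v 1 + v 3 ≤ _; linarith)
        (by push_cast; show v 0 + v 1 + a2 ≤ _; simp only [hB1def] at ha2B; linarith)
        (by push_cast; rfl)
      refine hcomb w w' hwmem hw'mem ?_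
      funext i
      have : ∀ j : Fin 5, ((1 - θ) • w + θ • w') j = (1 - θ) * w j + θ * w' j := fun j => rfl
      rw [this]
      fin_cases i
      · show v 0 = (1 - θ) * v 0 + θ * v 0; ring
      · show v 1 = (1 - θ) * v 1 + θ * v 1; ring
      · show v 2 = (1 - θ) * ((v 2 - θ * a2)/(1 - θ)) + θ * a2
        field_simp; ring
      · show v 3 = (1 - θ) * v 3 + θ * v 3; ring
      · show v 4 = (1 - θ) * ((t0:ℝ) - (l4:ℝ)) + θ * ((t0:ℝ) + 1 - (l4:ℝ))
        simp only [hθdef, hsdef]; ring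
    · -- Case B : l3 ≤ s
      push_neg at hc
      have ht0l3 : l3 ≤ t0 := Int.le_floor.mpr hc.le
      have ht0l3' : (l3:ℝ) ≤ (t0:ℝ) := by exact_mod_cast ht0l3
      have hθs : s = (t0:ℝ) + θ := by simp only [hθdef]; ring
      set B : ℝ := (l1:ℝ) - ((t0:ℝ) + 1) - v 0 with hBdef
      have hB : 0 ≤ B := by simp only [hBdef]; linarith
      set a1 : ℝ := min (v 1) B with ha1def
      have ha1v : a1 ≤ v 1 := min_le_left _ _
      have ha1B : a1 ≤ B := min_le_right _ _
      have ha1n : 0 ≤ a1 := le_min h6 hB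
      set a3 : ℝ := min (v 3) (min ((l2:ℝ) - ((t0:ℝ) + 1)) (B - a1)) with ha3def
      have ha3v : a3 ≤ v 3 := min_le_left _ _
      have ha3l2 : a3 ≤ (l2:ℝ) - ((t0:ℝ) + 1) := le_trans (min_le_right _ _) (min_le_left _ _)
      have ha3B : a3 ≤ B - a1 := le_trans (min_le_right _ _) (min_le_right _ _)
      have ha3n : 0 ≤ a3 := le_min h3 (le_min (by linarith) (by linarith))
      set a2 : ℝ := min (v 2) (B - a1) with ha2def
      have ha2v : a2 ≤ v 2 := min_le_left _ _
      have ha2B : a2 ≤ B - a1 := min_le_right _ _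
      have ha2n : 0 ≤ a2 := le_min h7 (by linarith)
      set w' : Fin 5 → ℝ := ![v 0, a1, a2, a3, (t0:ℝ) + 1 - (l4:ℝ)] with hw'def
      set w : Fin 5 → ℝ := ![v 0, (v 1 - θ*a1)/(1-θ), (v 2 - θ*a2)/(1-θ),
        (v 3 - θ*a3)/(1-θ), (t0:ℝ) - (l4:ℝ)] with hwdef
      have hmax0 : max (l3:ℝ) ((t0:ℝ)) = (t0:ℝ) := max_eq_right (by linarith)
      have hmax1 : max (l3:ℝ) ((t0:ℝ)+1) = (t0:ℝ)+1 := max_eq_right (by linarith)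
      have hs3 : v 3 ≤ (l2:ℝ) - (t0:ℝ) - θ := by
        simp only [hθdef, hsdef]; linarith
      have hv13 : v 1 + v 3 ≤ (l1:ℝ) - (t0:ℝ) - θ - v 0 := by
        simp only [hθdef, hsdef]; linarith
      have hv12 : v 1 + v 2 ≤ (l1:ℝ) - (t0:ℝ) - θ - v 0 := by
        simp only [hθdef, hsdef]; linarith
      have hnum : ∀ x y : ℝ, y ≤ x → 0 ≤ y → 0 ≤ x → 0 ≤ x - θ * y := by
        intro x y hxy hy hx
        linarith [mul_le_mul_of_nonneg_left hxy hθpos.le,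
          mul_le_mul_of_nonneg_right hθ1.le hx]
      -- membership of w' at level t0 + 1
      have hw'mem := mem_target (l1 := l1) (l2 := l2) (l3 := l3) (t0 + 1)
        (ht0l4.trans (Int.le.intro 1 rfl)) ht1l2 w'
        h1 h2 ha3n
        (by push_cast; rw [hmax1]; show a3 ≤ _; linarith)
        ha1n ha2n
        (by push_cast; rw [hmax1]; show v 0 + a1 + a3 ≤ _
            simp only [hBdef] at ha3B; linarith)
        (by push_cast; show v 0 + a1 + a2 ≤ _
            simp only [hBdef] at ha2B; linarith)
        (by push_cast; rfl)
      -- membership of w at level t0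
      have hc3 : (v 3 - θ*a3)/(1-θ) ≤ (l2:ℝ) - (t0:ℝ) := by
        rw [div_le_iff₀ h1θ]
        rcases min_cases (v 3) (min ((l2:ℝ) - ((t0:ℝ) + 1)) (B - a1)) with ⟨e3, le3⟩ | ⟨e3, lt3⟩
        · have e3' : a3 = v 3 := by rw [ha3def, e3]
          rw [e3']
          have m : v 3 ≤ (l2:ℝ) - (t0:ℝ) := by linarith
          linarith [mul_le_mul_of_nonneg_left m h1θ.le]
        · rcases min_cases ((l2:ℝ) - ((t0:ℝ) + 1)) (B - a1) with ⟨e4, le4⟩ | ⟨e4, lt4⟩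
          · have e3' : a3 = (l2:ℝ) - ((t0:ℝ) + 1) := by rw [ha3def, e3, e4]
            rw [e3']; linarith [hs3]
          · have e3' : a3 = B - a1 := by rw [ha3def, e3, e4]
            rcases min_cases (v 1) B with ⟨e1, le1⟩ | ⟨e1, lt1⟩
            · have e1' : a1 = v 1 := by rw [ha1def, e1]
              rw [e1'] at e3' lt4
              have k1 : v 3 ≤ B - v 1 + (1 - θ) := by simp only [hBdef]; linarith
              have k2 : B - v 1 + 1 ≤ (l2:ℝ) - (t0:ℝ) := by linarith
              rw [e3']
              linarith [mul_le_mul_of_nonneg_left k2 h1θ.le, k1]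
            · have e1' : a1 = B := by rw [ha1def, e1]
              rw [e1'] at e3'
              have k3 : v 3 ≤ 1 - θ := by simp only [hBdef] at lt1; linarith
              have k4 : (1:ℝ) ≤ (l2:ℝ) - (t0:ℝ) := by linarith
              rw [e3']
              linarith [mul_le_mul_of_nonneg_right k4 h1θ.le, k3]
      have key13 : v 1 + v 3 - θ*(a1 + a3) ≤ (1 - θ) * ((l1:ℝ) - (t0:ℝ) - v 0) := by
        rcases min_cases (v 1) B with ⟨e1, le1⟩ | ⟨e1, lt1⟩
        · have e1' : a1 = v 1 := by rw [ha1def, e1]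
          rw [e1']
          rcases min_cases (v 3) (min ((l2:ℝ) - ((t0:ℝ) + 1)) (B - a1)) with ⟨e3, le3⟩ | ⟨e3, lt3⟩
          · have e3' : a3 = v 3 := by rw [ha3def, e3]
            rw [e3']
            have m : v 1 + v 3 ≤ (l1:ℝ) - (t0:ℝ) - v 0 := by linarith
            linarith [mul_le_mul_of_nonneg_left m h1θ.le]
          · rcases min_cases ((l2:ℝ) - ((t0:ℝ) + 1)) (B - a1) with ⟨e4, le4⟩ | ⟨e4, lt4⟩
            · have e3' : a3 = (l2:ℝ) - ((t0:ℝ) + 1) := by rw [ha3def, e3, e4]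
              rw [e1'] at le4
              have m : v 1 + ((l2:ℝ) - (t0:ℝ)) ≤ (l1:ℝ) - (t0:ℝ) - v 0 := by
                simp only [hBdef] at le4; linarith
              rw [e3']
              linarith [mul_le_mul_of_nonneg_left m h1θ.le, hs3]
            · have e3' : a3 = B - a1 := by rw [ha3def, e3, e4]
              rw [e1'] at e3'
              rw [e3']; simp only [hBdef]; linarith
        · have e1' : a1 = B := by rw [ha1def, e1]
          rw [e1']; simp only [hBdef]
          linarith [mul_nonneg hθpos.le ha3n]
      have key12 : v 1 + v 2 - θ*(a1 + a2) ≤ (1 - θ) * ((l1:ℝ) - (t0:ℝ) - v 0) := by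
        rcases min_cases (v 1) B with ⟨e1, le1⟩ | ⟨e1, lt1⟩
        · have e1' : a1 = v 1 := by rw [ha1def, e1]
          rw [e1']
          rcases min_cases (v 2) (B - a1) with ⟨e2, le2⟩ | ⟨e2, lt2⟩
          · have e2' : a2 = v 2 := by rw [ha2def, e2]
            rw [e2']
            have m : v 1 + v 2 ≤ (l1:ℝ) - (t0:ℝ) - v 0 := by linarith
            linarith [mul_le_mul_of_nonneg_left m h1θ.le]
          · have e2' : a2 = B - a1 := by rw [ha2def, e2]
            rw [e1'] at e2'
            rw [e2']; simp only [hBdef]; linarith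
        · have e1' : a1 = B := by rw [ha1def, e1]
          rw [e1']; simp only [hBdef]
          linarith [mul_nonneg hθpos.le ha2n]
      have hc6 : v 0 + (v 1 - θ*a1)/(1-θ) + (v 3 - θ*a3)/(1-θ) ≤ (l1:ℝ) - (t0:ℝ) := by
        have : (v 1 - θ*a1)/(1-θ) + (v 3 - θ*a3)/(1-θ) ≤ (l1:ℝ) - (t0:ℝ) - v 0 := by
          rw [← add_div, div_le_iff₀ h1θ]; linarith [key13]
        linarith
      have hc7 : v 0 + (v 1 - θ*a1)/(1-θ) + (v 2 - θ*a2)/(1-θ) ≤ (l1:ℝ) - (t0:ℝ) := by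
        have : (v 1 - θ*a1)/(1-θ) + (v 2 - θ*a2)/(1-θ) ≤ (l1:ℝ) - (t0:ℝ) - v 0 := by
          rw [← add_div, div_le_iff₀ h1θ]; linarith [key12]
        linarith
      have hwmem := mem_target (l1 := l1) (l2 := l2) (l3 := l3) t0 ht0l4 ht0l2 w
        h1 h2
        (div_nonneg (hnum _ _ ha3v ha3n h3) h1θ.le)
        (by rw [hmax0]; exact hc3)
        (div_nonneg (hnum _ _ ha1v ha1n h6) h1θ.le)
        (div_nonneg (hnum _ _ ha2v ha2n h7) h1θ.le)
        (by rw [hmax0]; exact hc6)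
        hc7 rfl
      refine hcomb w w' hwmem hw'mem ?_
      funext i
      have he : ∀ j : Fin 5, ((1 - θ) • w + θ • w') j = (1 - θ) * w j + θ * w' j := fun j => rfl
      rw [he]
      fin_cases i
      · show v 0 = (1 - θ) * v 0 + θ * v 0; ring
      · show v 1 = (1 - θ) * ((v 1 - θ*a1)/(1-θ)) + θ * a1; field_simp; ring
      · show v 2 = (1 - θ) * ((v 2 - θ*a2)/(1-θ)) + θ * a2; field_simp; ring
      · show v 3 = (1 - θ) * ((v 3 - θ*a3)/(1-θ)) + θ * a3; field_simp; ring
      · show v 4 = (1 - θ) * ((t0:ℝ) - (l4:ℝ)) + θ * ((t0:ℝ) + 1 - (l4:ℝ))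
        simp only [hθdef, hsdef]; ring

theorem f1_as_convex_hull_of_translated_f2 (l1 l2 l3 l4 : ℤ)
    (h : l2 ≤ l1 ∧ l3 ≤ l2 ∧ l4 ≤ l3) :
    F1 (l1 : ℝ) (l2 : ℝ) (l3 : ℝ) (l4 : ℝ) =
      convexHull ℝ (⋃ t : ℤ, ⋃ (_ : l4 ≤ t ∧ t ≤ l2),
        ({(Pi.single 4 ((t : ℝ) - (l4 : ℝ)) : Fin 5 → ℝ)} +
          F2 (l1 : ℝ) (l2 : ℝ) (max (l3 : ℝ) (t : ℝ)) (t : ℝ))) := by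
  refine Set.Subset.antisymm (sub_hard l1 l2 l3 l4 h) ?_
  exact convexHull_min (sub_easy l1 l2 l3 l4 h) (convex_F1 _ _ _ _)
end

section
/- For n = 3 and dominant λ = (λ_1,λ_2,λ_3) ∈ ℤ^3, the number of integer points in FFLV(λ) equals the dimension of the irreducible GL_3 representation of highest weight λ, namely ((λ_1−λ_2+1)(λ_2−λ_3+1)(λ_1−λ_3+2))/2. -/
/-!
Slicing along the free coordinate `u^2_1`, the fibre over a point `(x, y)` of the box
`[0, λ₁ - λ₂] × [0, λ₂ - λ₃]` is the interval `[0, λ₁ - λ₃ - x - y]`. The reflection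
`(x, y) ↦ (λ₁ - λ₂ - x, λ₂ - λ₃ - y)` of the box turns the fibre length `λ₁ - λ₃ - x - y + 1`
into `x + y + 1`, so twice the count is the box size times `λ₁ - λ₃ + 2`.
-/

open Finset

theorem ncard_setOf_mem_and_mem_Icc (s : Finset (ℤ × ℤ)) (f : ℤ × ℤ → ℤ) :
    {u : ℤ × ℤ × ℤ | (u.1, u.2.2) ∈ s ∧ 0 ≤ u.2.1 ∧ u.2.1 ≤ f (u.1, u.2.2)}.ncard =
      ∑ p ∈ s, (f p + 1).toNat := by
  let fiber (p : ℤ × ℤ) : Finset (ℤ × ℤ × ℤ) := (Icc 0 (f p)).image fun z => (p.1, z, p.2)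
  have hset : {u : ℤ × ℤ × ℤ | (u.1, u.2.2) ∈ s ∧ 0 ≤ u.2.1 ∧ u.2.1 ≤ f (u.1, u.2.2)} =
      ↑(s.biUnion fiber) := by
    ext ⟨x, z, y⟩
    simp only [Set.mem_ofPred_eq, coe_biUnion, Set.mem_iUnion, mem_coe, fiber, mem_image,
      mem_Icc, Prod.mk.injEq, exists_prop]
    constructor
    · rintro ⟨hs, hz⟩
      exact ⟨(x, y), hs, z, hz, rfl, rfl, rfl⟩
    · rintro ⟨p, hs, z, hz, rfl, rfl, rfl⟩
      exact ⟨hs, hz⟩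
  have hdisj : (s : Set (ℤ × ℤ)).PairwiseDisjoint fiber := by
    intro p _ q _ hpq
    simp only [Function.onFun, disjoint_left, fiber, mem_image]
    rintro _ ⟨z, -, rfl⟩ ⟨w, -, h⟩
    simp only [Prod.mk.injEq] at h
    exact hpq (Prod.ext h.1.symm h.2.2.symm)
  have hcard (p : ℤ × ℤ) : (fiber p).card = (f p + 1).toNat := by
    rw [card_image_of_injective _ fun z w h => by simpa using h, Int.card_Icc, sub_zero]
  rw [hset, Set.ncard_coe_finset, card_biUnion hdisj]
  exact sum_congr rfl fun p _ => hcard p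

theorem two_mul_sum_Icc_product_Icc (a b : ℤ) (ha : 0 ≤ a) (hb : 0 ≤ b) :
    2 * ∑ p ∈ Icc 0 a ×ˢ Icc 0 b, (a + b - p.1 - p.2 + 1) = (a + 1) * (b + 1) * (a + b + 2) := by
  have hreflect : ∑ p ∈ Icc 0 a ×ˢ Icc 0 b, (a + b - p.1 - p.2 + 1) =
      ∑ p ∈ Icc 0 a ×ˢ Icc 0 b, (p.1 + p.2 + 1) := by
    refine sum_nbij' (fun p => (a - p.1, b - p.2)) (fun p => (a - p.1, b - p.2))
      ?_ ?_ ?_ ?_ ?_ <;> intro p <;> simp <;> omega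
  calc 2 * ∑ p ∈ Icc 0 a ×ˢ Icc 0 b, (a + b - p.1 - p.2 + 1)
      = ∑ p ∈ Icc 0 a ×ˢ Icc 0 b, (a + b - p.1 - p.2 + 1 + (p.1 + p.2 + 1)) := by
        rw [two_mul]
        nth_rewrite 2 [hreflect]
        exact sum_add_distrib.symm
    _ = ∑ _p ∈ Icc 0 a ×ˢ Icc 0 b, (a + b + 2) := sum_congr rfl fun _ _ => by ring
    _ = (a + 1) * (b + 1) * (a + b + 2) := by
        simp [card_product, ha, hb, add_nonneg]

theorem fflv3_lattice_point_count_is_weyl_dimension (l1 l2 l3 : ℤ)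
    (h12 : l2 ≤ l1) (h23 : l3 ≤ l2) :
    ({u : ℤ × ℤ × ℤ | 0 ≤ u.1 ∧ u.1 ≤ l1 - l2 ∧ 0 ≤ u.2.2 ∧ u.2.2 ≤ l2 - l3 ∧
        0 ≤ u.2.1 ∧ u.1 + u.2.1 + u.2.2 ≤ l1 - l3}.ncard : ℤ) =
      (l1 - l2 + 1) * (l2 - l3 + 1) * (l1 - l3 + 2) / 2 := by
  set a := l1 - l2
  set b := l2 - l3
  have hcount := ncard_setOf_mem_and_mem_Icc (Icc 0 a ×ˢ Icc 0 b) fun p => a + b - p.1 - p.2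
  dsimp only at hcount
  have hfflv : {u : ℤ × ℤ × ℤ | 0 ≤ u.1 ∧ u.1 ≤ a ∧ 0 ≤ u.2.2 ∧ u.2.2 ≤ b ∧
      0 ≤ u.2.1 ∧ u.1 + u.2.1 + u.2.2 ≤ l1 - l3} =
      {u | (u.1, u.2.2) ∈ Icc 0 a ×ˢ Icc 0 b ∧ 0 ≤ u.2.1 ∧ u.2.1 ≤ a + b - u.1 - u.2.2} := by
    ext u
    simp only [Set.mem_ofPred_eq, mem_product, mem_Icc]
    omega
  have hnonneg : ∑ p ∈ Icc 0 a ×ˢ Icc 0 b, ((a + b - p.1 - p.2 + 1).toNat : ℤ) =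
      ∑ p ∈ Icc 0 a ×ˢ Icc 0 b, (a + b - p.1 - p.2 + 1) := by
    refine sum_congr rfl fun p hp => Int.toNat_of_nonneg ?_
    simp only [mem_product, mem_Icc] at hp
    omega
  rw [hfflv, hcount, Nat.cast_sum, hnonneg, show l1 - l3 = a + b by omega,
    ← two_mul_sum_Icc_product_Icc a b (by omega) (by omega),
    Int.mul_ediv_cancel_left _ two_ne_zero]
end

section
/- For n = 4 and dominant integral λ, FFLV(λ) ⊂ ℝ^6 and GZ(λ) ⊂ ℝ^6 (both as defined by their explicit inequality systems) contain the same number of integer lattice points. -/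
private lemma vec6_four {α : Type*} (a b c d e f : α) : ![a,b,c,d,e,f] 4 = e := rfl
private lemma vec6_five {α : Type*} (a b c d e f : α) : ![a,b,c,d,e,f] 5 = f := rfl

theorem fflv4_gz4_same_lattice_point_count (l1 l2 l3 l4 : ℤ)
    (h12 : l2 ≤ l1) (h23 : l3 ≤ l2) (h34 : l4 ≤ l3) :
    {u : Fin 6 → ℤ | 0 ≤ u 0 ∧ u 0 ≤ l1 - l2 ∧ 0 ≤ u 1 ∧ u 1 ≤ l2 - l3 ∧
        0 ≤ u 2 ∧ u 2 ≤ l3 - l4 ∧ 0 ≤ u 3 ∧ 0 ≤ u 4 ∧ 0 ≤ u 5 ∧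
        u 0 + u 3 + u 1 ≤ l1 - l3 ∧ u 1 + u 4 + u 2 ≤ l2 - l4 ∧
        u 0 + u 3 + u 1 + u 4 + u 2 ≤ l1 - l4 ∧
        u 0 + u 3 + u 5 + u 4 + u 2 ≤ l1 - l4}.ncard =
    {z : Fin 6 → ℤ | l2 ≤ z 0 ∧ z 0 ≤ l1 ∧ l3 ≤ z 1 ∧ z 1 ≤ l2 ∧ l4 ≤ z 2 ∧ z 2 ≤ l3 ∧
        z 1 ≤ z 3 ∧ z 3 ≤ z 0 ∧ z 2 ≤ z 4 ∧ z 4 ≤ z 1 ∧ z 4 ≤ z 5 ∧ z 5 ≤ z 3}.ncard := by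
  set S : Set (Fin 6 → ℤ) := {u : Fin 6 → ℤ | 0 ≤ u 0 ∧ u 0 ≤ l1 - l2 ∧ 0 ≤ u 1 ∧ u 1 ≤ l2 - l3 ∧
        0 ≤ u 2 ∧ u 2 ≤ l3 - l4 ∧ 0 ≤ u 3 ∧ 0 ≤ u 4 ∧ 0 ≤ u 5 ∧
        u 0 + u 3 + u 1 ≤ l1 - l3 ∧ u 1 + u 4 + u 2 ≤ l2 - l4 ∧
        u 0 + u 3 + u 1 + u 4 + u 2 ≤ l1 - l4 ∧
        u 0 + u 3 + u 5 + u 4 + u 2 ≤ l1 - l4} with hS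
  set T : Set (Fin 6 → ℤ) := {z : Fin 6 → ℤ | l2 ≤ z 0 ∧ z 0 ≤ l1 ∧ l3 ≤ z 1 ∧ z 1 ≤ l2 ∧
        l4 ≤ z 2 ∧ z 2 ≤ l3 ∧
        z 1 ≤ z 3 ∧ z 3 ≤ z 0 ∧ z 2 ≤ z 4 ∧ z 4 ≤ z 1 ∧ z 4 ≤ z 5 ∧ z 5 ≤ z 3} with hT
  -- transfer map F : chain coords -> order coords
  set F : (Fin 6 → ℤ) → (Fin 6 → ℤ) := fun u =>
    ![max l2 (max (max l3 (l4 + u 2 + u 4) + u 1) (l4 + u 2 + u 4 + u 5) + u 3) + u 0,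
      max l3 (l4 + u 2 + u 4) + u 1,
      l4 + u 2,
      max (max l3 (l4 + u 2 + u 4) + u 1) (l4 + u 2 + u 4 + u 5) + u 3,
      l4 + u 2 + u 4,
      l4 + u 2 + u 4 + u 5] with hF
  set G : (Fin 6 → ℤ) → (Fin 6 → ℤ) := fun z =>
    ![z 0 - max l2 (z 3),
      z 1 - max l3 (z 4),
      z 2 - l4,
      z 3 - max (z 1) (z 5),
      z 4 - z 2,
      z 5 - z 4] with hG
  have hGF : ∀ u, G (F u) = u := by
    intro u
    funext i
    fin_cases i <;> simp [hF, hG, vec6_four, vec6_five] <;> omega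
  have key : T = F '' S := by
    ext z
    constructor
    · intro hz
      refine ⟨G z, ?_, ?_⟩
      · obtain ⟨h1, h2, h3, h4, h5, h6, h7, h8, h9, h10, h11, h12'⟩ := hz
        simp only [hS, hG, Set.mem_setOf_eq]
        simp [vec6_four, vec6_five]
        omega
      · obtain ⟨h1, h2, h3, h4, h5, h6, h7, h8, h9, h10, h11, h12'⟩ := hz
        funext i
        fin_cases i <;> simp [hF, hG, vec6_four, vec6_five] <;> omega
    · rintro ⟨u, hu, rfl⟩
      obtain ⟨h1, h2, h3, h4, h5, h6, h7, h8, h9, h10, h11, h12', h13⟩ := hu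
      simp only [hT, hF, Set.mem_setOf_eq]
      simp [vec6_four, vec6_five]
      omega
  have hinj : Set.InjOn F S := fun u _ v _ h => by
    have := congrArg G h
    rwa [hGF, hGF] at this
  rw [key, Set.ncard_image_of_injOn hinj]
end
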